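/- For every integer n with n ≡ 0 (mod 4) and 4 ≤ n ≤ 200, the n-crossing permutations over S_{n+2} generate exactly the alternating group: C(n, n+2) = A_{n+2}. -/

import Mathlib

/-- The underlying function of the `n`-crossing permutation `π_j` over `{1, …, m}` (as a
function on `ℕ`): it sends `j + k` to `j + n - 1 - k` for `0 ≤ k ≤ n - 1` and fixes all
other points. -/
def crossFun (n j i : ℕ) : ℕ :=
  if j ≤ i ∧ i < j + n then 2 * j + n - 1 - i else i

lemma crossFun_involutive (n j : ℕ) : Function.Involutive (crossFun n j) := by
  intro i
  unfold crossFun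
  split_ifs <;> omega

/-- The `n`-crossing permutation `π_j`, viewed as a permutation of `ℕ` fixing every point
outside `{j, …, j + n - 1}`. -/
def crossPerm (n j : ℕ) : Equiv.Perm ℕ :=
  Function.Involutive.toPerm _ (crossFun_involutive n j)

/-- `C n m` is the subgroup of the symmetric group `S_m` (realized as permutations of `ℕ`
supported on `{1, …, m}`) generated by the `n`-crossing permutations `π_1, …, π_{m-n+1}`. -/
def C (n m : ℕ) : Subgroup (Equiv.Perm ℕ) :=
  Subgroup.closure {σ | ∃ j, 1 ≤ j ∧ j ≤ m - n + 1 ∧ σ = crossPerm n j}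


/-- A (finitely supported) permutation is even if it is a product of an even number of
transpositions. For a permutation supported on `{1, ..., m}` this says exactly that it lies
in the alternating group `A_m`. -/
def IsEvenPerm (s : Equiv.Perm ℕ) : Prop :=
  ∃ l : List (Equiv.Perm ℕ), (∀ t ∈ l, t.IsSwap) ∧ l.prod = s ∧ Even l.length

/-!
The products `π₂ π₁` and `π₃ π₂` rotate `{1, …, n+1}` and `{2, …, n+2}` by two steps, so for
even `n` their `n/2`-th powers are one-step rotations, while `(π₂ π₁)(π₃ π₂)⁻¹` is a 3-cycle.
Conjugating by these rotations yields every 3-cycle `(k k+1 k+2)`, hence every product of two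
adjacent transpositions; since adjacent transpositions generate all permutations of
`{1, …, n+2}`, every even one lies in `C n (n+2)`. Conversely each `πⱼ` is a product of `n/2`
transpositions, an even number as `4 ∣ n`, and parity is well defined because an odd product of
transpositions is never the identity (move to a finite set and take the sign).
-/

open Equiv Equiv.Perm MulAction

section Parity

variable {α : Type*} [DecidableEq α]

theorem exists_finset_forall_eq_swap {l : List (Perm α)} (hl : ∀ t ∈ l, t.IsSwap) :
    ∃ s : Finset α, ∀ t ∈ l, ∃ x ∈ s, ∃ y ∈ s, x ≠ y ∧ t = swap x y := by
  induction l with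
  | nil => exact ⟨∅, by simp⟩
  | cons t l ih =>
    obtain ⟨s, hs⟩ := ih fun u hu => hl u (List.mem_cons_of_mem t hu)
    obtain ⟨x, y, hxy, rfl⟩ := hl t List.mem_cons_self
    refine ⟨insert x (insert y s), ?_⟩
    rintro u (_ | ⟨_, hu⟩)
    · exact ⟨x, by simp, y, by simp, hxy, rfl⟩
    · obtain ⟨a, ha, b, hb, hab, rfl⟩ := hs u hu
      exact ⟨a, by simp [ha], b, by simp [hb], hab, rfl⟩

theorem exists_map_ofSubtype_eq {s : Finset α} {l : List (Perm α)}
    (hl : ∀ t ∈ l, ∃ x ∈ s, ∃ y ∈ s, x ≠ y ∧ t = swap x y) :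
    ∃ l' : List (Perm s), (∀ t ∈ l', t.IsSwap) ∧ l'.map ofSubtype = l := by
  induction l with
  | nil => exact ⟨[], by simp⟩
  | cons t l ih =>
    obtain ⟨l', hl'swap, hl'⟩ := ih fun u hu => hl u (List.mem_cons_of_mem t hu)
    obtain ⟨x, hx, y, hy, hxy, rfl⟩ := hl t List.mem_cons_self
    refine ⟨swap ⟨x, hx⟩ ⟨y, hy⟩ :: l', ?_, by simp [hl', ofSubtype_swap_eq]⟩
    rintro u (_ | ⟨_, hu⟩)
    · exact ⟨_, _, by simpa using hxy, rfl⟩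
    · exact hl'swap u hu

theorem even_length_of_prod_eq_one {l : List (Perm α)} (hl : ∀ t ∈ l, t.IsSwap)
    (h : l.prod = 1) : Even l.length := by
  obtain ⟨s, hs⟩ := exists_finset_forall_eq_swap hl
  obtain ⟨l', hl'swap, rfl⟩ := exists_map_ofSubtype_eq hs
  rw [← map_list_prod, ← map_one (ofSubtype : Perm s →* Perm α)] at h
  rw [List.length_map, ← prod_list_swap_mem_alternatingGroup_iff_even_length hl'swap,
    ofSubtype_injective h]
  exact one_mem _

end Parity

theorem Subgroup.mem_or_mul_mem_of_mem_closure {G : Type*} [Group G] {H : Subgroup G}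
    {S : Set G} (hS : ∀ s ∈ S, ∀ t ∈ S, s * t ∈ H) {t₀ : G} (ht₀ : t₀ ∈ S) {g : G}
    (hg : g ∈ closure S) : g ∈ H ∨ g * t₀ ∈ H := by
  have hinv : ∀ s ∈ S, s⁻¹ * t₀ ∈ H := fun s hs => by
    simpa [mul_assoc] using H.mul_mem (H.inv_mem (hS s hs s hs)) (hS s hs t₀ ht₀)
  induction hg using closure_induction_right with
  | one => exact .inl H.one_mem
  | mul_right g _ s hs ih =>
    rcases ih with h | h
    · exact .inr (by simpa [mul_assoc] using H.mul_mem h (hS s hs t₀ ht₀))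
    · exact .inl (by simpa [mul_assoc] using H.mul_mem h (H.inv_mem (hinv s hs)))
  | mul_inv_cancel g _ s hs ih =>
    rcases ih with h | h
    · exact .inr (by simpa [mul_assoc] using H.mul_mem h (hinv s hs))
    · exact .inl (by simpa [mul_assoc] using H.mul_mem h (H.inv_mem (hS s hs t₀ ht₀)))

theorem Subgroup.mul_mem_of_forall_mul_succ_mem {G : Type*} [Group G] {H : Subgroup G}
    {f : ℕ → G} {a b : ℕ} (hsq : ∀ k, f k * f k ∈ H)
    (hsucc : ∀ k ∈ Set.Ico a b, f k * f (k + 1) ∈ H) :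
    ∀ i ∈ Set.Icc a b, ∀ j ∈ Set.Icc a b, f i * f j ∈ H := by
  -- `x * z = (x * y) * (y * y)⁻¹ * (y * z)`
  have trans : ∀ i j k, f i * f j ∈ H → f j * f k ∈ H → f i * f k ∈ H := fun i j k hij hjk => by
    simpa [mul_assoc] using H.mul_mem (H.mul_mem hij (H.inv_mem (hsq j))) hjk
  have up : ∀ i ∈ Set.Icc a b, ∀ d, i + d ≤ b → f i * f (i + d) ∈ H := by
    intro i hi d
    induction d with
    | zero => exact fun _ => hsq i
    | succ d ih => exact fun hd => trans _ _ _ (ih (by omega)) (hsucc _ ⟨by grind, by omega⟩)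
  intro i hi j hj
  rcases le_total i j with hij | hji
  · simpa [Nat.add_sub_cancel' hij] using up i hi (j - i) (by grind)
  · have hji' := up j hj (i - j) (by grind)
    rw [Nat.add_sub_cancel' hji] at hji'
    simpa [mul_assoc] using H.mul_mem (H.mul_mem (hsq i) (H.inv_mem hji')) (hsq j)

def adjacentSwaps (a b : ℕ) : Set (Perm ℕ) := (fun k => swap k (k + 1)) '' Set.Ico a b

theorem isSwap_of_mem_adjacentSwaps {a b : ℕ} : ∀ f ∈ adjacentSwaps a b, f.IsSwap := by
  rintro _ ⟨k, -, rfl⟩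
  exact ⟨k, k + 1, by omega, rfl⟩

theorem swap_mem_closure_adjacentSwaps {a b x y : ℕ} (hx : x ∈ Set.Icc a b)
    (hy : y ∈ Set.Icc a b) : swap x y ∈ Subgroup.closure (adjacentSwaps a b) := by
  wlog hxy : x ≤ y generalizing x y
  · rw [swap_comm]
    exact this hy hx (by omega)
  obtain ⟨d, rfl⟩ := Nat.exists_eq_add_of_le hxy
  simp only [Set.mem_Icc] at hx hy
  clear hxy
  induction d with
  | zero =>
    rw [add_zero, swap_self, ← Perm.one_def]
    exact one_mem _
  | succ d ih =>
    exact SubmonoidClass.swap_mem_trans _ (ih ⟨by omega, by omega⟩)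
      (Subgroup.subset_closure ⟨x + d, ⟨by omega, by omega⟩, rfl⟩)

theorem mem_closure_adjacentSwaps {a b : ℕ} {σ : Perm ℕ}
    (hσ : σ ∈ fixingSubgroup (Perm ℕ) (Set.Icc a b)ᶜ) :
    σ ∈ Subgroup.closure (adjacentSwaps a b) := by
  rw [mem_fixingSubgroup_iff] at hσ
  have hmaps : ∀ x ∈ Set.Icc a b, σ x ∈ Set.Icc a b := fun x hx => by
    by_contra h
    rw [σ.injective (hσ _ h)] at h
    exact h hx
  refine (mem_closure_isSwap isSwap_of_mem_adjacentSwaps).2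
    ⟨(Set.finite_Icc a b).subset fun x hx => ?_, fun x => ?_⟩
  · by_contra h
    exact hx (hσ x h)
  · by_cases hx : x ∈ Set.Icc a b
    · exact (swap_mem_closure_isSwap isSwap_of_mem_adjacentSwaps).1
        (swap_mem_closure_adjacentSwaps (hmaps x hx) hx)
    · rw [show σ x = x from hσ x hx]
      exact mem_orbit_self x

def evenPerms : Subgroup (Perm ℕ) where
  carrier := {σ | IsEvenPerm σ}
  one_mem' := ⟨[], by simp, rfl, ⟨0, rfl⟩⟩
  mul_mem' := by
    rintro σ τ ⟨l, hl, rfl, hle⟩ ⟨m, hm, rfl, hme⟩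
    refine ⟨l ++ m, ?_, List.prod_append, by simpa using hle.add hme⟩
    simpa [or_imp, forall_and] using ⟨hl, hm⟩
  inv_mem' := by
    rintro σ ⟨l, hl, rfl, hle⟩
    refine ⟨(l.map (·⁻¹)).reverse, ?_, (List.prod_inv_reverse l).symm, by simpa using hle⟩
    simp only [List.mem_reverse, List.mem_map]
    rintro _ ⟨t, ht, rfl⟩
    obtain ⟨x, y, hxy, rfl⟩ := hl t ht
    exact ⟨x, y, hxy, swap_inv x y⟩

theorem swap_notMem_evenPerms {x y : ℕ} (hxy : x ≠ y) : swap x y ∉ evenPerms := by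
  rintro ⟨l, hl, hprod, hle⟩
  have := even_length_of_prod_eq_one (l := l ++ [swap x y])
    (by simpa [or_imp, forall_and] using ⟨hl, x, y, hxy, rfl⟩) (by simp [hprod])
  rw [List.length_append, List.length_singleton, Nat.even_add_one] at this
  exact this hle

theorem swap_mul_swap_mem_evenPerms {a b c d : ℕ} (hab : a ≠ b) (hcd : c ≠ d) :
    swap a b * swap c d ∈ evenPerms :=
  ⟨[swap a b, swap c d], by simpa using ⟨⟨a, b, hab, rfl⟩, c, d, hcd, rfl⟩, by simp, even_two⟩

theorem crossPerm_apply (n j i : ℕ) :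
    crossPerm n j i = if j ≤ i ∧ i < j + n then 2 * j + n - 1 - i else i :=
  rfl

theorem crossPerm_mem_fixingSubgroup (n j : ℕ) :
    crossPerm n j ∈ fixingSubgroup (Perm ℕ) (Set.Ico j (j + n))ᶜ := by
  rw [mem_fixingSubgroup_iff]
  intro i hi
  exact if_neg hi

theorem crossPerm_add_two (n j : ℕ) :
    crossPerm (n + 2) j = swap j (j + n + 1) * crossPerm n (j + 1) := by
  ext i
  simp only [Perm.mul_apply, crossPerm_apply, swap_apply_def]
  split_ifs <;> omega

theorem crossPerm_mem_evenPerms {n : ℕ} (hn : 4 ∣ n) (j : ℕ) : crossPerm n j ∈ evenPerms := by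
  obtain ⟨k, rfl⟩ := hn
  induction k generalizing j with
  | zero =>
    convert evenPerms.one_mem
    ext i
    simp [crossPerm_apply]
  | succ k ih =>
    rw [show 4 * (k + 1) = 4 * k + 2 + 2 by ring, crossPerm_add_two, crossPerm_add_two, ← mul_assoc]
    exact evenPerms.mul_mem (swap_mul_swap_mem_evenPerms (by omega) (by omega)) (ih _)

def crossRotation (n j : ℕ) : Perm ℕ := crossPerm n (j + 1) * crossPerm n j

theorem crossRotation_apply {n : ℕ} (hn : 2 ≤ n) (j i : ℕ) :
    crossRotation n j i =
      if j ≤ i ∧ i + 2 ≤ j + n then i + 2 else if i + 1 = j + n then j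
      else if i = j + n then j + 1 else i := by
  simp only [crossRotation, Perm.mul_apply, crossPerm_apply]
  split_ifs <;> omega

theorem crossRotation_pow_apply {n j k : ℕ} (hn : 2 ≤ n) (hk : 2 * k ≤ n) (i : ℕ) :
    (crossRotation n j ^ k) i =
      if j ≤ i ∧ i + 2 * k ≤ j + n then i + 2 * k
      else if j + n < i + 2 * k ∧ i ≤ j + n then i + 2 * k - (n + 1) else i := by
  induction k with
  | zero =>
    simp only [pow_zero, Perm.one_apply]
    split_ifs <;> omega
  | succ k ih =>
    rw [pow_succ', Perm.mul_apply, ih (by omega), crossRotation_apply hn]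
    split_ifs <;> omega

theorem crossRotation_pow_half_apply {n : ℕ} (hn : Even n) (hn2 : 2 ≤ n) (j i : ℕ) :
    (crossRotation n j ^ (n / 2)) i =
      if i = j then j + n else if j < i ∧ i ≤ j + n then i - 1 else i := by
  rw [crossRotation_pow_apply hn2 (by omega)]
  obtain ⟨m, rfl⟩ := hn
  split_ifs <;> omega

theorem crossRotation_mul_inv {n : ℕ} (hn : 2 ≤ n) (j : ℕ) :
    crossRotation n j * (crossRotation n (j + 1))⁻¹ =
      swap j (j + 2) * swap (j + 2) (j + n + 1) := by
  rw [mul_inv_eq_iff_eq_mul]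
  ext i
  simp only [Perm.mul_apply, crossRotation_apply hn, swap_apply_def]
  split_ifs <;> omega

theorem swap_mul_swap_apply_mem_iff {α : Type*} [DecidableEq α] {H : Subgroup (Perm α)}
    {f : Perm α} (hf : f ∈ H) (x y z : α) :
    swap (f x) (f y) * swap (f y) (f z) ∈ H ↔ swap x y * swap y z ∈ H := by
  rw [swap_apply_apply, swap_apply_apply,
    show f * swap x y * f⁻¹ * (f * swap y z * f⁻¹) = f * (swap x y * swap y z) * f⁻¹ by group]
  exact ⟨fun h => by simpa [mul_assoc] using H.mul_mem (H.mul_mem (H.inv_mem hf) h) hf,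
    fun h => H.mul_mem (H.mul_mem hf h) (H.inv_mem hf)⟩

section CrossingGroup

variable {n : ℕ}

theorem crossPerm_mem_C {j : ℕ} (hj : 1 ≤ j) (hj3 : j ≤ 3) : crossPerm n j ∈ C n (n + 2) :=
  Subgroup.subset_closure ⟨j, hj, by omega, rfl⟩

theorem crossRotation_mem_C {j : ℕ} (hj : 1 ≤ j) (hj2 : j ≤ 2) : crossRotation n j ∈ C n (n + 2) :=
  mul_mem (crossPerm_mem_C (by omega) (by omega)) (crossPerm_mem_C hj (by omega))

theorem swap_mul_swap_mem_C_one (hn : Even n) (hn4 : 4 ≤ n) :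
    swap 1 2 * swap 2 3 ∈ C n (n + 2) := by
  have hT : swap 1 3 * swap 3 (n + 2) ∈ C n (n + 2) := by
    have h := crossRotation_mul_inv (n := n) (by omega) 1
    simp only [Nat.reduceAdd, show 1 + n + 1 = n + 2 by omega] at h
    rw [← h]
    exact mul_mem (crossRotation_mem_C le_rfl one_le_two)
      (inv_mem (crossRotation_mem_C one_le_two le_rfl))
  set u := (crossRotation n 2 ^ (n / 2))⁻¹ * crossRotation n 1 ^ (n / 2)
  have hu : u ∈ C n (n + 2) :=
    mul_mem (inv_mem (pow_mem (crossRotation_mem_C one_le_two le_rfl) _))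
      (pow_mem (crossRotation_mem_C le_rfl one_le_two) _)
  have hu_apply : u 1 = n + 2 ∧ u 3 = 3 ∧ u (n + 2) = 2 := by
    simp only [u, Perm.mul_apply, Perm.inv_eq_iff_eq, crossRotation_pow_half_apply hn (by omega)]
    split_ifs <;> omega
  have hV := (swap_mul_swap_apply_mem_iff hu 1 3 (n + 2)).2 hT
  rw [hu_apply.1, hu_apply.2.1, hu_apply.2.2] at hV
  -- the two 3-cycles share the points `3` and `n + 2`, so their product lives on `{1, 2, 3}`
  have h := mul_mem hT hV
  rw [mul_assoc, ← mul_assoc (swap 3 (n + 2)), swap_comm (n + 2) 3, swap_mul_self, one_mul] at h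
  convert inv_mem h using 1
  ext i
  simp only [mul_inv_rev, swap_inv, Perm.mul_apply, swap_apply_def]
  split_ifs <;> omega

theorem exists_mem_C_shift (hn : Even n) (hn4 : 4 ≤ n) {k : ℕ} (hk : 1 ≤ k) (hkn : k + 1 ≤ n) :
    ∃ f ∈ C n (n + 2), f (k + 1) = k ∧ f (k + 2) = k + 1 ∧ f (k + 3) = k + 2 := by
  by_cases hk3 : k + 3 ≤ n + 1
  · refine ⟨_, pow_mem (crossRotation_mem_C le_rfl one_le_two) (n / 2), ?_⟩
    simp only [crossRotation_pow_half_apply hn (by omega)]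
    split_ifs <;> omega
  · refine ⟨_, pow_mem (crossRotation_mem_C one_le_two le_rfl) (n / 2), ?_⟩
    simp only [crossRotation_pow_half_apply hn (by omega)]
    split_ifs <;> omega

theorem swap_mul_swap_succ_mem_C (hn : Even n) (hn4 : 4 ≤ n) {k : ℕ} (hk : 1 ≤ k) (hkn : k ≤ n) :
    swap k (k + 1) * swap (k + 1) (k + 2) ∈ C n (n + 2) := by
  induction k, hk using Nat.le_induction with
  | base => exact swap_mul_swap_mem_C_one hn hn4
  | succ k hk ih =>
    obtain ⟨f, hf, h1, h2, h3⟩ := exists_mem_C_shift hn hn4 hk hkn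
    rw [← swap_mul_swap_apply_mem_iff hf, h1, h2, h3]
    exact ih (by omega)

theorem mul_mem_C_of_mem_adjacentSwaps (hn : Even n) (hn4 : 4 ≤ n) :
    ∀ s ∈ adjacentSwaps 1 (n + 2), ∀ t ∈ adjacentSwaps 1 (n + 2), s * t ∈ C n (n + 2) := by
  rintro _ ⟨i, hi, rfl⟩ _ ⟨j, hj, rfl⟩
  refine Subgroup.mul_mem_of_forall_mul_succ_mem (f := fun k => swap k (k + 1)) (b := n + 1)
    (fun k => by simp) (fun k hk => ?_) i ⟨hi.1, by grind⟩ j ⟨hj.1, by grind⟩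
  exact swap_mul_swap_succ_mem_C hn hn4 hk.1 (by grind)

theorem C_le (hn : 4 ∣ n) :
    C n (n + 2) ≤ fixingSubgroup (Perm ℕ) (Set.Icc 1 (n + 2))ᶜ ⊓ evenPerms := by
  refine (Subgroup.closure_le _).2 ?_
  rintro _ ⟨j, hj, hj3, rfl⟩
  refine ⟨fixingSubgroup_antitone (Perm ℕ) ℕ ?_ (crossPerm_mem_fixingSubgroup n j),
    crossPerm_mem_evenPerms hn j⟩
  intro i
  simp only [Set.mem_compl_iff, Set.mem_Icc, Set.mem_Ico]
  omega

theorem C_eq (hn : 4 ∣ n) (hn4 : 4 ≤ n) :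
    C n (n + 2) = fixingSubgroup (Perm ℕ) (Set.Icc 1 (n + 2))ᶜ ⊓ evenPerms := by
  refine le_antisymm (C_le hn) fun σ ⟨hfix, heven⟩ => ?_
  have hn' : Even n := even_iff_two_dvd.2 (dvd_trans (by norm_num) hn)
  refine (Subgroup.mem_or_mul_mem_of_mem_closure (mul_mem_C_of_mem_adjacentSwaps hn' hn4)
    ⟨1, ⟨le_rfl, by omega⟩, rfl⟩ (mem_closure_adjacentSwaps hfix)).resolve_right fun h => ?_
  refine swap_notMem_evenPerms (x := 1) (y := 2) (by decide) ?_
  simpa using evenPerms.mul_mem (evenPerms.inv_mem heven) (C_le hn h).2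

end CrossingGroup

theorem stmt16_general (n : ℕ) (hn : n % 4 = 0) (hn4 : 4 ≤ n) :
    ∀ σ : Equiv.Perm ℕ, σ ∈ C n (n + 2) ↔
      ((∀ i, σ i ≠ i → 1 ≤ i ∧ i ≤ n + 2) ∧ IsEvenPerm σ) := by
  intro σ
  rw [C_eq (Nat.dvd_of_mod_eq_zero hn) hn4, Subgroup.mem_inf,
    mem_fixingSubgroup_compl_iff_movedBy_subset]
  rfl

theorem stmt16 (n : ℕ) (hn : n % 4 = 0) (hn4 : 4 ≤ n) (hn200 : n ≤ 200) :
    ∀ σ : Equiv.Perm ℕ, σ ∈ C n (n + 2) ↔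
      ((∀ i, σ i ≠ i → 1 ≤ i ∧ i ≤ n + 2) ∧ IsEvenPerm σ) :=
  stmt16_general n hn hn4
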